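/- The family (C_a), indexed by the Finsets a ⊆ Ω° (where Ω := Finset.univ), is an F-basis of the center Z(T) of the Terwilliger F-algebra T; in particular the F-dimension of Z(T) equals 2^(n₂). -/

import Mathlib

open Matrix Finset
open scoped Classical

set_option synthInstance.maxHeartbeats 1000000
set_option maxHeartbeats 2000000

noncomputable section

variable {n : ℕ}

/-- The disagreement set of two tuples. -/
def dis {U : Fin n → Type} [∀ i, DecidableEq (U i)] (x y : ∀ i, U i) : Finset (Fin n) :=
  Finset.univ.filter fun i => x i ≠ y i

/-- `S° = {i ∈ S | 2 < |U i|}`. -/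
def circ (U : Fin n → Type) [∀ i, Fintype (U i)] (S : Finset (Fin n)) : Finset (Fin n) :=
  S.filter fun i => 2 < Fintype.card (U i)

/-- The valency `k_S`. -/
def val (U : Fin n → Type) [∀ i, Fintype (U i)] (S : Finset (Fin n)) : ℕ :=
  ∏ i ∈ S, (Fintype.card (U i) - 1)

variable (U : Fin n → Type) [∀ i, Fintype (U i)] [∀ i, DecidableEq (U i)]
variable (F : Type) [Field F]

/-- The adjacency matrix `A_S`. -/
def Amat (S : Finset (Fin n)) : Matrix (∀ i, U i) (∀ i, U i) F :=
  Matrix.of fun x y => if dis x y = S then 1 else 0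

/-- The dual idempotent `E_S^*(x₀)`. -/
def Emat (x₀ : ∀ i, U i) (S : Finset (Fin n)) : Matrix (∀ i, U i) (∀ i, U i) F :=
  Matrix.diagonal fun y => if dis x₀ y = S then 1 else 0

/-- The Terwilliger `F`-algebra of the factorial scheme with respect to the base point `x₀`:
the subalgebra of `Matrix X X F` generated by the adjacency matrices and dual idempotents. -/
def Tw (x₀ : ∀ i, U i) : Subalgebra F (Matrix (∀ i, U i) (∀ i, U i) F) :=
  Algebra.adjoin F ({M | ∃ S, M = Amat U F S} ∪ {M | ∃ S, M = Emat U F x₀ S})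

/-- `B_{g,h,i} = ∑_{g △ i ⊆ j ⊆ h} E_g A_j E_i`. -/
def Bmat (x₀ : ∀ i, U i) (g h i : Finset (Fin n)) : Matrix (∀ i, U i) (∀ i, U i) F :=
  ∑ j ∈ Finset.univ.filter (fun j => symmDiff g i ⊆ j ∧ j ⊆ h),
    Emat U F x₀ g * Amat U F j * Emat U F x₀ i

/-- `C_g = ∑_h k_{g \ h} • B_{h, g ∩ h, h}`. -/
def Cmat (x₀ : ∀ i, U i) (g : Finset (Fin n)) : Matrix (∀ i, U i) (∀ i, U i) F :=
  ∑ h : Finset (Fin n), ((val U (g \ h) : ℕ) : F) • Bmat U F x₀ h (g ∩ h) h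

/-- `n₂ = |{i | 2 < card (U i)}|`. -/
def nTwo : ℕ := (Finset.univ.filter fun i : Fin n => 2 < Fintype.card (U i)).card

/-!
Every matrix in `T` is invariant under the coordinatewise permutations of `X` fixing `x₀`, and
these act transitively on the triples `(x, y)` with prescribed `D(x₀,x)`, `D(x₀,y)`, `D(x,y)`;
so an element of `T` is a function of these three sets. A central element `M` is in addition
block diagonal for the partition of `X` by `D(x₀, ·)` and commutes with every `A_{i}`. If `i`
lies outside `D(x₀,x)` and `y'` is `y` changed at `i`, then `(M A_{i}) x y' = M x y`, while
`(A_{i} M) x y'` only involves rows of strictly larger blocks; so `M` vanishes once it vanishes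
on the top block `D(x₀,x) = Ω`, where it is a function of `D(x,y) ⊆ Ω°`. Hence
`dim Z(T) ≤ 2 ^ n₂`.

Conversely, `C_a` is the tensor product over the coordinates of the identity (for `i ∉ a`) and
of a matrix with constant row and column sums `|U i| - 1` (for `i ∈ a`), while `A_S` is a tensor
product of identities and adjacency matrices `J - I` of complete graphs; so `C_a` commutes with
all `A_S`, and, being block diagonal, with all `E_S`. On the top block `C_a` is the indicator of
`D(x,y) ⊆ a`, a unitriangular family, so the `2 ^ n₂` matrices `C_a` are independent.
-/

theorem Equiv.Perm.exists_fix_apply_apply {V : Type*} [DecidableEq V] {p a b a' b' : V}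
    (hpa : p = a ↔ p = a') (hpb : p = b ↔ p = b') (hab : a = b ↔ a' = b') :
    ∃ e : Equiv.Perm V, e p = p ∧ e a = a' ∧ e b = b' := by
  refine ⟨(Equiv.swap a a').trans (Equiv.swap (Equiv.swap a a' b) b'), ?_, ?_, ?_⟩ <;>
    simp only [Equiv.trans_apply, Equiv.swap_apply_def] <;> grind

theorem linearIndependent_ite_le {P R : Type*} [PartialOrder P] [Fintype P] [Ring R]
    [DecidableLE P] :
    LinearIndependent R fun a : P => fun j : P => if j ≤ a then (1 : R) else 0 := by
  rw [Fintype.linearIndependent_iff]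
  intro g hg a
  induction a using WellFoundedGT.induction with | _ a ih => ?_
  have hsum := congrFun hg a
  simp only [Finset.sum_apply, Pi.smul_apply, smul_eq_mul, mul_ite, mul_one, mul_zero,
    Pi.zero_apply] at hsum
  rwa [Finset.sum_eq_single a (fun b _ hba => ?_) (by simp), if_pos le_rfl] at hsum
  split_ifs with hab
  exacts [ih b (lt_of_le_of_ne hab (Ne.symm hba)), rfl]

namespace Matrix

variable {ι R : Type*} [Fintype ι] [CommSemiring R] {V W Z : ι → Type*}

def piKron (m : ∀ i, Matrix (V i) (W i) R) : Matrix (∀ i, V i) (∀ i, W i) R :=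
  of fun x y => ∏ i, m i (x i) (y i)

theorem piKron_apply (m : ∀ i, Matrix (V i) (W i) R) (x : ∀ i, V i) (y : ∀ i, W i) :
    piKron m x y = ∏ i, m i (x i) (y i) := rfl

theorem piKron_mul [DecidableEq ι] [∀ i, Fintype (W i)] (m : ∀ i, Matrix (V i) (W i) R)
    (m' : ∀ i, Matrix (W i) (Z i) R) : piKron m * piKron m' = piKron fun i => m i * m' i := by
  ext x y
  simp only [mul_apply, piKron_apply, ← Finset.prod_mul_distrib, Fintype.prod_sum]

theorem commute_piKron [DecidableEq ι] [∀ i, Fintype (V i)] {m m' : ∀ i, Matrix (V i) (V i) R}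
    (h : ∀ i, Commute (m i) (m' i)) : Commute (piKron m) (piKron m') := by
  simp only [Commute, SemiconjBy, piKron_mul, fun i => (h i).eq]

end Matrix

section CenterFactor

variable {V : Type*} [Fintype V] [DecidableEq V] (R : Type*) [Ring R]

def centerFactor (p : V) : Matrix V V R :=
  Matrix.of fun u v => if p = u then (if p = v then ((Fintype.card V - 1 : ℕ) : R) else 0)
    else if p = v then 0 else 1

theorem commute_centerFactor_of_one (p : V) :
    Commute (centerFactor R p) (Matrix.of 1) := by
  ext u v
  obtain rfl | hu := eq_or_ne p u <;> obtain rfl | hv := eq_or_ne p v <;>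
    simp [Matrix.mul_apply, centerFactor, Finset.sum_ite, Finset.filter_ne,
      Finset.card_erase_of_mem, *]

theorem commute_centerFactor_adjMatrix (p : V) :
    Commute (centerFactor R p) ((SimpleGraph.completeGraph V).adjMatrix R) := by
  rw [SimpleGraph.adjMatrix_completeGraph_eq_of_one_sub_one]
  exact (commute_centerFactor_of_one R p).sub_right (Commute.one_right _)

end CenterFactor

theorem card_eq_finrank_of_linearIndependent_of_injective {K V ι : Type*} [Field K]
    [AddCommGroup V] [Module K V] [Fintype ι] {C : ι → V} (hC : LinearIndependent K C)
    {φ : V →ₗ[K] ι → K} (hφ : Function.Injective φ) : Fintype.card ι = Module.finrank K V :=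
  have : Module.Finite K V := .of_injective φ hφ
  le_antisymm hC.fintype_card_le_finrank
    ((LinearMap.finrank_le_finrank_of_injective hφ).trans_eq (Module.finrank_fintype_fun_eq_card K))

section Disagreement

variable {U : Fin n → Type} [∀ i, DecidableEq (U i)] {F : Type} [Field F]

theorem mem_dis {x y : ∀ i, U i} {i : Fin n} : i ∈ dis x y ↔ x i ≠ y i := by
  simp [dis]

theorem eq_iff_eq_of_dis_eq {x y x' y' : ∀ i, U i} (h : dis x y = dis x' y') (i : Fin n) :
    x i = y i ↔ x' i = y' i := by
  simpa [mem_dis] using (Finset.ext_iff.mp h i).not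

theorem exists_equiv_dis_eq {x₀ x y x' y' : ∀ i, U i} (hx : dis x₀ x = dis x₀ x')
    (hy : dis x₀ y = dis x₀ y') (hxy : dis x y = dis x' y') :
    ∃ e : (∀ i, U i) ≃ (∀ i, U i), (∀ z w, dis (e z) (e w) = dis z w) ∧ e x₀ = x₀ ∧
      e x = x' ∧ e y = y' := by
  choose σ hσ₀ hσx hσy using fun i => Equiv.Perm.exists_fix_apply_apply
    (eq_iff_eq_of_dis_eq hx i) (eq_iff_eq_of_dis_eq hy i) (eq_iff_eq_of_dis_eq hxy i)
  refine ⟨Equiv.piCongrRight σ, fun z w => ?_, funext hσ₀, funext hσx, funext hσy⟩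
  ext i
  simp [mem_dis, (σ i).injective.ne_iff]

variable (U F)

theorem submatrix_Amat {e : (∀ i, U i) ≃ (∀ i, U i)} (he : ∀ z w, dis (e z) (e w) = dis z w)
    (S : Finset (Fin n)) : (Amat U F S).submatrix e e = Amat U F S := by
  ext x y; simp [Amat, he]

theorem submatrix_Emat {e : (∀ i, U i) ≃ (∀ i, U i)} {x₀ : ∀ i, U i}
    (he : ∀ z w, dis (e z) (e w) = dis z w) (he₀ : e x₀ = x₀) (S : Finset (Fin n)) :
    (Emat U F x₀ S).submatrix e e = Emat U F x₀ S := by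
  have he₀' : ∀ y, dis x₀ (e y) = dis x₀ y := fun y => by simpa [he₀] using he x₀ y
  rw [Emat, Matrix.submatrix_diagonal_equiv]
  simp only [Function.comp_def, he₀']

theorem Amat_eq_piKron (S : Finset (Fin n)) :
    Amat U F S = Matrix.piKron fun i =>
      if i ∈ S then (SimpleGraph.completeGraph (U i)).adjMatrix F else 1 := by
  ext x y
  have hfactor : ∀ i, (if i ∈ S then (SimpleGraph.completeGraph (U i)).adjMatrix F else 1)
      (x i) (y i) = if (i ∈ dis x y ↔ i ∈ S) then 1 else 0 := by
    intro i
    by_cases hi : i ∈ S <;> simp [hi, mem_dis, Matrix.one_apply]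
  simp only [Amat, Matrix.piKron_apply, Matrix.of_apply, hfactor, Finset.prod_boole,
    Finset.mem_univ, true_implies, ← Finset.ext_iff]

end Disagreement

section Invariance

variable {U : Fin n → Type} [∀ i, Fintype (U i)] [∀ i, DecidableEq (U i)] {F : Type} [Field F]

theorem submatrix_eq_of_mem_Tw {x₀ : ∀ i, U i} {e : (∀ i, U i) ≃ (∀ i, U i)}
    (he : ∀ z w, dis (e z) (e w) = dis z w) (he₀ : e x₀ = x₀)
    {M : Matrix (∀ i, U i) (∀ i, U i) F} (hM : M ∈ Tw U F x₀) : M.submatrix e e = M := by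
  have hle : Tw U F x₀ ≤
      AlgHom.equalizer (Matrix.reindexAlgEquiv F F e.symm).toAlgHom (AlgHom.id F _) := by
    refine Algebra.adjoin_le ?_
    rintro _ (⟨S, rfl⟩ | ⟨S, rfl⟩) <;>
      simp [Matrix.reindex_apply, submatrix_Amat U F he, submatrix_Emat U F he he₀]
  simpa [AlgHom.mem_equalizer, Matrix.reindex_apply] using hle hM

theorem apply_eq_of_mem_Tw {x₀ : ∀ i, U i} {M : Matrix (∀ i, U i) (∀ i, U i) F}
    (hM : M ∈ Tw U F x₀) {x y x' y' : ∀ i, U i} (hx : dis x₀ x = dis x₀ x')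
    (hy : dis x₀ y = dis x₀ y') (hxy : dis x y = dis x' y') : M x y = M x' y' := by
  obtain ⟨e, he, he₀, rfl, rfl⟩ := exists_equiv_dis_eq hx hy hxy
  exact (congrFun₂ (submatrix_eq_of_mem_Tw he he₀ hM) x y).symm

end Invariance

section Entries

variable {U : Fin n → Type} [∀ i, Fintype (U i)] [∀ i, DecidableEq (U i)] {F : Type} [Field F]

theorem dis_subset_circ {x₀ x y : ∀ i, U i} (h : dis x₀ x = dis x₀ y) :
    dis x y ⊆ circ U (dis x₀ x) := by
  intro i hi
  have hxy := eq_iff_eq_of_dis_eq h i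
  rw [mem_dis] at hi
  have hx : x₀ i ≠ x i := fun h0 => hi (h0.symm.trans (hxy.mp h0))
  refine Finset.mem_filter.mpr ⟨mem_dis.mpr hx, ?_⟩
  calc 2 < ({x₀ i, x i, y i} : Finset (U i)).card := by
        rw [Finset.card_insert_of_notMem, Finset.card_pair hi] <;> grind
    _ ≤ Fintype.card (U i) := Finset.card_le_univ _

variable (U F)

theorem Bmat_apply (x₀ : ∀ i, U i) (g h i : Finset (Fin n)) (x y : ∀ i, U i) :
    Bmat U F x₀ g h i x y = if dis x₀ x = g ∧ dis x₀ y = i ∧ symmDiff g i ⊆ dis x y ∧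
      dis x y ⊆ h then 1 else 0 := by
  simp only [Bmat, Emat, Amat, Matrix.sum_apply, Matrix.mul_diagonal, Matrix.diagonal_mul,
    Matrix.of_apply, mul_ite, mul_one, mul_zero]
  by_cases hx : dis x₀ x = g <;> by_cases hy : dis x₀ y = i <;>
    simp [hx, hy]

theorem Cmat_apply (x₀ : ∀ i, U i) (a : Finset (Fin n)) (x y : ∀ i, U i) :
    Cmat U F x₀ a x y = if dis x₀ x = dis x₀ y ∧ dis x y ⊆ a
      then ((val U (a \ dis x₀ x) : ℕ) : F) else 0 := by
  simp only [Cmat, Matrix.sum_apply, Matrix.smul_apply, Bmat_apply, symmDiff_self,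
    Finset.bot_eq_empty, Finset.empty_subset, true_and, smul_eq_mul, mul_ite, mul_one, mul_zero,
    ite_and, Finset.sum_ite_eq, Finset.mem_univ, if_true]
  by_cases h : dis x₀ x = dis x₀ y
  · have hsub : dis x y ⊆ dis x₀ x := (dis_subset_circ h).trans (Finset.filter_subset _ _)
    simp only [if_pos h, if_pos h.symm, Finset.subset_inter_iff, hsub, and_true]
  · simp [h, Ne.symm h]

theorem Cmat_eq_piKron (x₀ : ∀ i, U i) (a : Finset (Fin n)) :
    Cmat U F x₀ a = Matrix.piKron fun i => if i ∈ a then centerFactor F (x₀ i) else 1 := by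
  ext x y
  have hfactor : ∀ i, (if i ∈ a then centerFactor F (x₀ i) else 1) (x i) (y i) =
      if (x₀ i = x i ↔ x₀ i = y i) ∧ (i ∉ a → x i = y i) then
        (if i ∈ a ∧ x₀ i = x i then ((Fintype.card (U i) - 1 : ℕ) : F) else 1) else 0 := by
    intro i
    by_cases hi : i ∈ a <;> simp [hi, centerFactor, Matrix.one_apply] <;> grind
  have hcond : (∀ i ∈ Finset.univ, (x₀ i = x i ↔ x₀ i = y i) ∧ (i ∉ a → x i = y i)) ↔
      dis x₀ x = dis x₀ y ∧ dis x y ⊆ a := by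
    simp only [Finset.ext_iff, Finset.subset_iff, mem_dis, ne_eq, not_iff_not, Finset.mem_univ,
      true_implies, forall_and, not_imp_comm]
  have hval : a \ dis x₀ x = Finset.univ.filter fun i => i ∈ a ∧ x₀ i = x i := by
    ext i; simp [mem_dis]
  rw [Cmat_apply, Matrix.piKron_apply, Finset.prod_congr rfl fun i _ => hfactor i,
    Finset.prod_ite_zero, ← Finset.prod_filter, hval, _root_.val, Nat.cast_prod]
  simp only [hcond]

end Entries

section Centrality

variable {U : Fin n → Type} [∀ i, Fintype (U i)] [∀ i, DecidableEq (U i)] {F : Type} [Field F]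
  (x₀ : ∀ i, U i)

theorem commute_Cmat_Amat (a S : Finset (Fin n)) : Commute (Cmat U F x₀ a) (Amat U F S) := by
  rw [Cmat_eq_piKron, Amat_eq_piKron]
  refine Matrix.commute_piKron fun i => ?_
  split_ifs
  exacts [commute_centerFactor_adjMatrix F (x₀ i), Commute.one_right _, Commute.one_left _,
    Commute.one_left _]

theorem commute_Cmat_Emat (a S : Finset (Fin n)) : Commute (Cmat U F x₀ a) (Emat U F x₀ S) := by
  ext x y
  simp only [Emat, Matrix.mul_diagonal, Matrix.diagonal_mul]
  by_cases h : dis x₀ x = dis x₀ y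
  · rw [h, mul_comm]
  · simp [Cmat_apply, h]

theorem Cmat_mem_Tw (a : Finset (Fin n)) : Cmat U F x₀ a ∈ Tw U F x₀ := by
  refine Subalgebra.sum_mem _ fun h _ => Subalgebra.smul_mem _ ?_ _
  refine Subalgebra.sum_mem _ fun j _ => mul_mem (mul_mem ?_ ?_) ?_ <;>
    apply Algebra.subset_adjoin
  exacts [Or.inr ⟨h, rfl⟩, Or.inl ⟨j, rfl⟩, Or.inr ⟨h, rfl⟩]

theorem Cmat_mem_center (a : Finset (Fin n)) :
    (⟨Cmat U F x₀ a, Cmat_mem_Tw x₀ a⟩ : Tw U F x₀) ∈ Subalgebra.center F (Tw U F x₀) := by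
  refine Subalgebra.mem_center_iff.mpr fun M => Subtype.ext ?_
  refine (Algebra.commute_of_mem_adjoin_of_forall_mem_commute M.2 ?_).eq.symm
  rintro _ (⟨S, rfl⟩ | ⟨S, rfl⟩)
  exacts [commute_Cmat_Amat x₀ a S, commute_Cmat_Emat x₀ a S]

end Centrality

section Center

variable {U : Fin n → Type} [∀ i, Fintype (U i)] [∀ i, DecidableEq (U i)] {F : Type} [Field F]

theorem mul_Amat_singleton_apply_update {x₀ x y : ∀ i, U i}
    {P : Matrix (∀ i, U i) (∀ i, U i) F} (hblock : ∀ x y, dis x₀ x ≠ dis x₀ y → P x y = 0)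
    (hxy : dis x₀ x = dis x₀ y) {i : Fin n} (hi : i ∉ dis x₀ x) {w : U i} (hw : w ≠ x₀ i) :
    (P * Amat U F {i}) x (Function.update y i w) = P x y := by
  have hyi : x₀ i = y i := by simpa [mem_dis, hxy] using hi
  rw [Matrix.mul_apply, Finset.sum_eq_single y]
  · have hyy' : dis y (Function.update y i w) = {i} := by
      ext j
      by_cases hj : j = i
      · subst hj; simp [mem_dis, ← hyi, Ne.symm hw]
      · simp [mem_dis, hj]
    simp [Amat, hyy']
  · intro z _ hzy
    by_cases hz : dis z (Function.update y i w) = {i}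
    · have hzi : x₀ i ≠ z i := by
        refine fun hzi => hzy (funext fun j => ?_)
        by_cases hj : j = i
        · rw [hj, ← hzi, hyi]
        · simpa [mem_dis, hj] using (Finset.ext_iff.mp hz j).not
      rw [hblock x z fun h => hi (h ▸ mem_dis.mpr hzi), zero_mul]
    · simp [Amat, hz]
  · simp

theorem eq_zero_of_commute_Amat (hU : ∀ i, 2 ≤ Fintype.card (U i)) {x₀ : ∀ i, U i}
    {P : Matrix (∀ i, U i) (∀ i, U i) F} (hblock : ∀ x y, dis x₀ x ≠ dis x₀ y → P x y = 0)
    (hcomm : ∀ i, Commute P (Amat U F {i}))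
    (htop : ∀ x y, dis x₀ x = Finset.univ → dis x₀ y = Finset.univ → P x y = 0) : P = 0 := by
  suffices ∀ h, ∀ x y, dis x₀ x = h → P x y = 0 by ext x y; exact this _ x y rfl
  intro h
  induction h using WellFoundedGT.induction with | _ h ih => ?_
  rintro x y rfl
  by_cases hxy : dis x₀ x = dis x₀ y
  swap
  · exact hblock x y hxy
  by_cases huniv : dis x₀ x = Finset.univ
  · exact htop x y huniv (hxy ▸ huniv)
  obtain ⟨i, hi⟩ : ∃ i, i ∉ dis x₀ x := by simpa [Finset.eq_univ_iff_forall] using huniv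
  have : Nontrivial (U i) := Fintype.one_lt_card_iff_nontrivial.mp (hU i)
  obtain ⟨w, hw⟩ := exists_ne (x₀ i)
  have hxi : x₀ i = x i := by simpa [mem_dis] using hi
  have hR : (Amat U F {i} * P) x (Function.update y i w) = 0 := by
    rw [Matrix.mul_apply]
    refine Finset.sum_eq_zero fun z _ => ?_
    by_cases hz : dis x z = {i}
    · have hins : dis x₀ z = insert i (dis x₀ x) := by
        ext j
        have hj : x j ≠ z j ↔ j = i := by simpa [mem_dis] using Finset.ext_iff.mp hz j
        by_cases hji : j = i
        · subst hji; simp [mem_dis, hxi, hj.mpr rfl]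
        · simp [mem_dis, hji, not_not.mp (hj.not.mpr hji)]
      rw [ih _ (hins ▸ Finset.ssubset_insert hi) z _ rfl, mul_zero]
    · simp [Amat, hz]
  rw [← mul_Amat_singleton_apply_update hblock hxy hi hw, (hcomm i).eq, hR]

theorem exists_top_block_points (hU : ∀ i, 2 ≤ Fintype.card (U i)) (x₀ : ∀ i, U i) :
    ∃ (u : ∀ i, U i) (v : Finset (Fin n) → ∀ i, U i), dis x₀ u = Finset.univ ∧
      ∀ j ⊆ circ U Finset.univ, dis x₀ (v j) = Finset.univ ∧ dis u (v j) = j := by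
  have : ∀ i, Nontrivial (U i) := fun i => Fintype.one_lt_card_iff_nontrivial.mp (hU i)
  choose u hu using fun i => exists_ne (x₀ i)
  have hw : ∀ i, ∃ w : U i, 2 < Fintype.card (U i) → w ≠ x₀ i ∧ w ≠ u i := by
    intro i
    by_cases hi : 2 < Fintype.card (U i)
    · obtain ⟨w, -, hw⟩ := Finset.exists_mem_notMem_of_card_lt_card (s := {x₀ i, u i})
        (t := Finset.univ) ((Finset.card_le_two).trans_lt hi)
      exact ⟨w, fun _ => by simpa [not_or] using hw⟩
    · exact ⟨u i, fun h => absurd h hi⟩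
  choose w hw using hw
  refine ⟨u, fun j i => if i ∈ j then w i else u i, ?_, fun j hj => ⟨?_, ?_⟩⟩
  · ext i; simp [mem_dis, Ne.symm (hu i)]
  · ext i
    by_cases hi : i ∈ j
    · simp [mem_dis, hi, Ne.symm (hw i (Finset.mem_filter.mp (hj hi)).2).1]
    · simp [mem_dis, hi, Ne.symm (hu i)]
  · ext i
    by_cases hi : i ∈ j
    · simp [mem_dis, hi, Ne.symm (hw i (Finset.mem_filter.mp (hj hi)).2).2]
    · simp [mem_dis, hi]

theorem center_ext_of_top_block (hU : ∀ i, 2 ≤ Fintype.card (U i)) {x₀ u : ∀ i, U i}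
    {v : Finset (Fin n) → ∀ i, U i} (hu : dis x₀ u = Finset.univ)
    (hv : ∀ j ⊆ circ U Finset.univ, dis x₀ (v j) = Finset.univ ∧ dis u (v j) = j)
    {M M' : Subalgebra.center F (Tw U F x₀)}
    (htop : ∀ j ⊆ circ U Finset.univ, M.1.1 u (v j) = M'.1.1 u (v j)) : M = M' := by
  have hcomm : ∀ M : Subalgebra.center F (Tw U F x₀), ∀ N ∈ Tw U F x₀, Commute M.1.1 N :=
    fun M N hN => congrArg Subtype.val (Subalgebra.mem_center_iff.mp M.2 ⟨N, hN⟩) |>.symm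
  have hP : M.1.1 - M'.1.1 ∈ Tw U F x₀ := sub_mem M.1.2 M'.1.2
  have hPcomm : ∀ N ∈ Tw U F x₀, Commute (M.1.1 - M'.1.1) N :=
    fun N hN => (hcomm M N hN).sub_left (hcomm M' N hN)
  refine Subtype.ext (Subtype.ext (sub_eq_zero.mp ?_))
  refine eq_zero_of_commute_Amat hU (x₀ := x₀) (fun x y hxy => ?_)
    (fun i => hPcomm _ (Algebra.subset_adjoin (Or.inl ⟨{i}, rfl⟩))) fun x y hx hy => ?_
  · have hE := congrFun₂ (hPcomm _ (Algebra.subset_adjoin (Or.inr ⟨dis x₀ y, rfl⟩))).eq x y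
    simpa [Emat, hxy] using hE
  · have hj : dis x y ⊆ circ U Finset.univ := hx ▸ dis_subset_circ (hx.trans hy.symm)
    rw [apply_eq_of_mem_Tw hP (hx.trans hu.symm) (hy.trans (hv _ hj).1.symm) (hv _ hj).2.symm,
      Matrix.sub_apply, htop _ hj, sub_self]

end Center

theorem stmt6 (hU : ∀ i, 2 ≤ Fintype.card (U i)) (x₀ : ∀ i, U i) :
    (∃ b : Module.Basis {a : Finset (Fin n) // a ⊆ circ U Finset.univ} F
        (Subalgebra.center F (Tw U F x₀)),
      ∀ a, (((b a : Subalgebra.center F (Tw U F x₀)) : Tw U F x₀) :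
          Matrix (∀ i, U i) (∀ i, U i) F) = Cmat U F x₀ a) ∧
    Module.finrank F (Subalgebra.center F (Tw U F x₀)) = 2 ^ nTwo U := by
  set ι := {a : Finset (Fin n) // a ⊆ circ U Finset.univ}
  set Z := Subalgebra.center F (Tw U F x₀)
  obtain ⟨u, v, hu, hv⟩ := exists_top_block_points hU x₀
  let C : ι → Z := fun a => ⟨⟨Cmat U F x₀ a, Cmat_mem_Tw x₀ a⟩, Cmat_mem_center x₀ a⟩
  let φ : Z →ₗ[F] (ι → F) := LinearMap.pi fun j =>
    Matrix.entryLinearMap F F u (v j) ∘ₗ (Tw U F x₀).val.toLinearMap ∘ₗ Z.val.toLinearMap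
  have hφ : Function.Injective φ := fun M M' h =>
    center_ext_of_top_block hU hu hv fun j hj => congrFun h ⟨j, hj⟩
  have hφC : φ ∘ C = fun a j => if j ≤ a then 1 else 0 := by
    funext a j
    simp [φ, C, Cmat_apply, hu, hv j j.2, _root_.val,
      Finset.sdiff_eq_empty_iff_subset.mpr (Finset.subset_univ _)]
  have hC : LinearIndependent F C := .of_comp φ (hφC ▸ linearIndependent_ite_le)
  -- without `V := Z`, elaboration times out unifying the instance paths on the center
  have hcard := card_eq_finrank_of_linearIndependent_of_injective (V := Z) hC hφ
  have : Nonempty ι := ⟨⟨∅, Finset.empty_subset _⟩⟩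
  refine ⟨⟨basisOfLinearIndependentOfCardEqFinrank (V := Z) hC hcard, fun a => ?_⟩, ?_⟩
  · rw [coe_basisOfLinearIndependentOfCardEqFinrank]
  · rw [← hcard, Fintype.card_subtype, Finset.filter_subset_univ, Finset.card_powerset]
    rfl

end
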